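/- The subgroup Γ_L acts freely on the upper half-plane: for every g ∈ Γ_L and every z ∈ ℍ, if g • z = z then g = 1. -/

import Mathlib

open UpperHalfPlane MatrixGroups

noncomputable section

/-- The generator `A n = !![8n+4, −(1+8n(8n+4)); 1, −8n]` of the Loch Ness monster group. -/
def A (n : ℤ) : SL(2, ℝ) :=
  ⟨!![8 * (n : ℝ) + 4, -(1 + 8 * (n : ℝ) * (8 * (n : ℝ) + 4)); 1, -(8 * (n : ℝ))], by
    rw [Matrix.det_fin_two_of]; ring⟩

/-- The generator `B n = !![8n+6, −1−(8n+2)(8n+6); 1, −(8n+2)]` of the Loch Ness monster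
group. -/
def B (n : ℤ) : SL(2, ℝ) :=
  ⟨!![8 * (n : ℝ) + 6, -1 - (8 * (n : ℝ) + 2) * (8 * (n : ℝ) + 6); 1, -(8 * (n : ℝ) + 2)], by
    rw [Matrix.det_fin_two_of]; ring⟩

/-- The subgroup of `SL(2,ℝ)` generated by the `A n` and `B n`, `n ∈ ℤ`. -/
def ΓL : Subgroup SL(2, ℝ) := Subgroup.closure (Set.range A ∪ Set.range B)

/-!
Every generator of `Γ_L` is an integral matrix, and modulo 8 all the `A n` reduce to
`!![4, 7; 1, 0]` and all the `B n` to `!![6, 3; 1, 6]`. These generate a subgroup of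
`SL(2, ℤ/8ℤ)` of order 16 which does not contain `-1` and in which every trace is 2, 4 or 6.
On the other hand an element of `SL(2, ℝ)` fixing a point of `ℍ` is `±1` or elliptic, i.e. has
`|trace| < 2`, which for an integral matrix means trace `-1`, `0` or `1`.
-/

open Matrix

theorem Matrix.SpecialLinearGroup.eq_one_or_eq_neg_one_or_sq_trace_lt_four_of_smul_eq
    {g : SL(2, ℝ)} {z : ℍ} (h : g • z = z) : g = 1 ∨ g = -1 ∨ g.1.trace ^ 2 < 4 := by
  by_cases hc : (g : GL (Fin 2) ℝ) ∈ Subgroup.center _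
  · obtain ⟨r, hr⟩ := GeneralLinearGroup.mem_center_iff_val_mem_range_scalar.1 hc
    have hg : g.1 = scalar (Fin 2) r := hr.symm
    have hr2 : r ^ 2 = 1 := by simpa [hg] using g.2
    rcases sq_eq_one_iff.mp hr2 with rfl | rfl
    · left; ext1; simp [hg]
    · right; left; ext i j; fin_cases i <;> fin_cases j <;> simp [hg]
  · have hell := isElliptic_of_exists_smul_eq_self (by simp) hc ⟨z, h⟩
    unfold GeneralLinearGroup.IsElliptic Matrix.IsElliptic at hell
    rw [discr_fin_two] at hell
    right; right
    simpa using hell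

theorem ModularGroup.eq_one_or_eq_neg_one_or_abs_trace_le_one_of_smul_eq {M : SL(2, ℤ)} {z : ℍ}
    (h : (M : SL(2, ℝ)) • z = z) : M = 1 ∨ M = -1 ∨ |M.1.trace| ≤ 1 := by
  rcases SpecialLinearGroup.eq_one_or_eq_neg_one_or_sq_trace_lt_four_of_smul_eq h with
    h1 | h1 | htr
  · exact .inl (SpecialLinearGroup.map_intCast_injective (by simpa using h1))
  · exact .inr (.inl (SpecialLinearGroup.map_intCast_injective (by simpa using h1)))
  · have htr' : M.1.trace ^ 2 < 2 ^ 2 := by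
      have : ((M.1.trace ^ 2 : ℤ) : ℝ) < 4 := by
        simpa [SpecialLinearGroup.coe_matrix_coe, trace_fin_two] using htr
      norm_num
      exact_mod_cast this
    have := abs_lt_of_sq_lt_sq htr' zero_le_two
    exact .inr (.inr (by omega))

def entries {R : Type*} (m : Matrix (Fin 2) (Fin 2) R) : R × R × R × R :=
  (m 0 0, m 0 1, m 1 0, m 1 1)

/-- The `entries` of the subgroup of `SL(2, ℤ/8ℤ)` generated by `!![4, 7; 1, 0]` and
`!![6, 3; 1, 6]`. -/
def mod8Table : List (ZMod 8 × ZMod 8 × ZMod 8 × ZMod 8) :=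
  [(0, 1, 7, 4), (0, 3, 5, 4), (1, 0, 0, 1), (1, 6, 6, 5), (2, 1, 3, 2), (2, 7, 5, 2),
   (3, 0, 0, 3), (3, 2, 2, 7), (4, 5, 3, 0), (4, 7, 1, 0), (5, 2, 2, 1), (5, 4, 4, 5),
   (6, 3, 1, 6), (6, 5, 7, 6), (7, 4, 4, 7), (7, 6, 6, 3)]

set_option maxRecDepth 4000 in
theorem mod8Table_mul : ∀ p ∈ mod8Table, ∀ q ∈ mod8Table,
    (p.1 * q.1 + p.2.1 * q.2.2.1, p.1 * q.2.1 + p.2.1 * q.2.2.2,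
      p.2.2.1 * q.1 + p.2.2.2 * q.2.2.1, p.2.2.1 * q.2.1 + p.2.2.2 * q.2.2.2) ∈ mod8Table := by
  intro p hp q hq
  fin_cases hp <;> fin_cases hq <;> decide

theorem mod8Table_adjugate : ∀ p ∈ mod8Table, (p.2.2.2, -p.2.1, -p.2.2.1, p.1) ∈ mod8Table := by
  intro p hp
  fin_cases hp <;> decide

theorem mod8Table_trace : ∀ p ∈ mod8Table, p.1 + p.2.2.2 ∈ ({2, 4, 6} : Finset (ZMod 8)) := by
  intro p hp
  fin_cases hp <;> decide

def ΓLmod8 : Subgroup SL(2, ZMod 8) where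
  carrier := {g | entries g.1 ∈ mod8Table}
  mul_mem' {x y} hx hy := by
    simpa [entries, mul_apply, Fin.sum_univ_two] using mod8Table_mul _ hx _ hy
  one_mem' := by decide
  inv_mem' {x} hx := by
    simpa [entries, SpecialLinearGroup.coe_inv, adjugate_fin_two] using mod8Table_adjugate _ hx

theorem neg_one_not_mem_ΓLmod8 : -1 ∉ ΓLmod8 := by
  change entries (-1 : SL(2, ZMod 8)).1 ∉ mod8Table
  decide

theorem ne_neg_one_of_coe_mem_ΓLmod8 {M : SL(2, ℤ)} (hM : (M : SL(2, ZMod 8)) ∈ ΓLmod8) :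
    M ≠ -1 := by
  rintro rfl
  exact neg_one_not_mem_ΓLmod8 (by simpa using hM)

theorem one_lt_abs_trace_of_coe_mem_ΓLmod8 {M : SL(2, ℤ)} (hM : (M : SL(2, ZMod 8)) ∈ ΓLmod8) :
    1 < |M.1.trace| := by
  have htr : ((M.1.trace : ℤ) : ZMod 8) ∈ ({2, 4, 6} : Finset (ZMod 8)) := by
    simpa [entries, SpecialLinearGroup.coe_matrix_coe, trace_fin_two] using
      mod8Table_trace _ hM
  by_contra! h
  obtain ⟨h1, h2⟩ := abs_le.1 h
  interval_cases M.1.trace <;> revert htr <;> decide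

def intGen (p q : ℤ) : SL(2, ℤ) :=
  ⟨!![p, -1 - p * q; 1, -q], by rw [det_fin_two_of]; ring⟩

theorem coe_intGen (R : Type*) [CommRing R] (p q : ℤ) :
    ((intGen p q : SL(2, R)) : Matrix (Fin 2) (Fin 2) R) = !![(p : R), -1 - p * q; 1, -q] := by
  rw [SpecialLinearGroup.coe_matrix_coe]
  ext i j
  fin_cases i <;> fin_cases j <;> simp [intGen]

theorem coe_intGen_eq_A (n : ℤ) : (intGen (8 * n + 4) (8 * n) : SL(2, ℝ)) = A n := by
  ext1
  rw [coe_intGen, A]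
  push_cast
  ring_nf

theorem coe_intGen_eq_B (n : ℤ) : (intGen (8 * n + 6) (8 * n + 2) : SL(2, ℝ)) = B n := by
  ext1
  rw [coe_intGen, B]
  push_cast
  ring_nf

theorem coe_intGen_mem_ΓLmod8 {p q : ℤ}
    (h : ((p : ZMod 8), -1 - (p : ZMod 8) * q, 1, -(q : ZMod 8)) ∈ mod8Table) :
    (intGen p q : SL(2, ZMod 8)) ∈ ΓLmod8 := by
  change entries _ ∈ mod8Table
  rwa [entries, coe_intGen]

theorem ΓL_le_map_comap_ΓLmod8 :
    ΓL ≤ (ΓLmod8.comap (SpecialLinearGroup.map (Int.castRingHom (ZMod 8)))).map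
      (SpecialLinearGroup.map (Int.castRingHom ℝ)) := by
  have h8 : (8 : ZMod 8) = 0 := rfl
  rw [ΓL, Subgroup.closure_le]
  rintro _ (⟨n, rfl⟩ | ⟨n, rfl⟩)
  · exact ⟨_, coe_intGen_mem_ΓLmod8 (by simp [h8]; decide), coe_intGen_eq_A n⟩
  · exact ⟨_, coe_intGen_mem_ΓLmod8 (by simp [h8]; decide), coe_intGen_eq_B n⟩

/-- `Γ_L` acts freely on the upper half-plane. -/
theorem stmt_5 : ∀ g ∈ ΓL, ∀ z : ℍ, g • z = z → g = 1 := by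
  intro g hg z hz
  obtain ⟨M, hM, rfl⟩ := ΓL_le_map_comap_ΓLmod8 hg
  rcases ModularGroup.eq_one_or_eq_neg_one_or_abs_trace_le_one_of_smul_eq hz with
    rfl | rfl | htr
  · exact map_one _
  · exact absurd rfl (ne_neg_one_of_coe_mem_ΓLmod8 hM)
  · exact absurd htr (not_le.2 (one_lt_abs_trace_of_coe_mem_ΓLmod8 hM))
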